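/- For n ≥ k ≥ 1, the sum of q^{MAJ(σ)} over 1̲32-avoiding permutations σ of [n] with exactly k−1 descents equals S_q(n,k). -/

import Mathlib

open Finset

variable {n : ℕ}

/-- The word (in one-line notation, with letters `1,...,n`) of a permutation of `[n]`. -/
def pw (p : Equiv.Perm (Fin n)) : Fin n → ℕ := fun i => (p i : ℕ) + 1

/-- Descent number of a word: positions `i` with `w_i > w_{i+1}`. -/
def desW (w : Fin n → ℕ) : ℕ :=
  (Finset.univ.filter fun i : Fin n => ∃ j : Fin n, (j : ℕ) = (i : ℕ) + 1 ∧ w j < w i).card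

/-- Major index of a word: the sum of the (1-indexed) descent positions. -/
def majW (w : Fin n → ℕ) : ℕ :=
  ∑ i ∈ Finset.univ.filter
      (fun i : Fin n => ∃ j : Fin n, (j : ℕ) = (i : ℕ) + 1 ∧ w j < w i), ((i : ℕ) + 1)

/-- Occurrences of the vincular pattern 2-31: `i < j` with `w_{j+1} < w_i < w_j`. -/
def pat2_31 (w : Fin n → ℕ) : ℕ :=
  ((Finset.univ ×ˢ Finset.univ).filter fun q : Fin n × Fin n =>
    q.1 < q.2 ∧ ∃ j' : Fin n, (j' : ℕ) = (q.2 : ℕ) + 1 ∧ w j' < w q.1 ∧ w q.1 < w q.2).card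

/-- Occurrences of the vincular pattern 2-13: `i < j` with `w_j < w_i < w_{j+1}`. -/
def pat2_13 (w : Fin n → ℕ) : ℕ :=
  ((Finset.univ ×ˢ Finset.univ).filter fun q : Fin n × Fin n =>
    q.1 < q.2 ∧ ∃ j' : Fin n, (j' : ℕ) = (q.2 : ℕ) + 1 ∧ w q.2 < w q.1 ∧ w q.1 < w j').card

/-- Occurrences of the vincular pattern 1-32: `i < j` with `w_i < w_{j+1} < w_j`. -/
def pat1_32 (w : Fin n → ℕ) : ℕ :=
  ((Finset.univ ×ˢ Finset.univ).filter fun q : Fin n × Fin n =>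
    q.1 < q.2 ∧ ∃ j' : Fin n, (j' : ℕ) = (q.2 : ℕ) + 1 ∧ w q.1 < w j' ∧ w j' < w q.2).card

/-- Occurrences of the vincular pattern 3-21: `i < j` with `w_{j+1} < w_j < w_i`. -/
def pat3_21 (w : Fin n → ℕ) : ℕ :=
  ((Finset.univ ×ˢ Finset.univ).filter fun q : Fin n × Fin n =>
    q.1 < q.2 ∧ ∃ j' : Fin n, (j' : ℕ) = (q.2 : ℕ) + 1 ∧ w j' < w q.2 ∧ w q.2 < w q.1).card

/-- The Babson–Steingrímsson statistic BAST = (21) + (2-13) + (1-32) + (3-21). -/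
def BAST (w : Fin n → ℕ) : ℕ := desW w + pat2_13 w + pat1_32 w + pat3_21 w

/-- `w` avoids the vincular pattern 1-32: there is no `i < j` with `w_i < w_{j+1} < w_j`. -/
def Avoids132 (w : Fin n → ℕ) : Prop :=
  ∀ i j j' : Fin n, i < j → (j' : ℕ) = (j : ℕ) + 1 → ¬(w i < w j' ∧ w j' < w j)

open Polynomial in
/-- The q-integer [k]_q. -/
noncomputable def qint (k : ℕ) : Polynomial ℚ := ∑ i ∈ Finset.range k, X ^ i

open Polynomial in
/-- The q-Stirling number S_q(n,k). -/
noncomputable def Sq : ℕ → ℕ → Polynomial ℚ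
  | 0, 0 => 1
  | 0, _ + 1 => 0
  | _ + 1, 0 => 0
  | n + 1, k + 1 => X ^ k * Sq n k + qint (k + 1) * Sq n (k + 1)


/-!
Every permutation of `[m+1]` arises exactly once by inserting the letter `m+1` into a
permutation `τ` of `[m]`. For `m ≥ 1` the result avoids 1-32 iff `τ` does and the new letter goes
first, last, or directly after a descent of `τ`: anywhere else it is the `3` of an occurrence
whose `2` is the letter right after it. Going first adds a descent and raises MAJ by `des τ + 1`;
going last changes nothing; going after the `j`-th descent from the right keeps the descents and
raises MAJ by `j`. Summing, the MAJ-polynomials of 1-32-avoiders with `k - 1` descents satisfy the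
recurrence defining `S_q(n, k)`, and they agree with it at `n = 1`.
-/

open Polynomial

lemma sum_apply_card_filter_le {α β : Type*} [LinearOrder α] [AddCommMonoid β] (D : Finset α)
    (g : ℕ → β) : ∑ e ∈ D, g (#(D.filter (e ≤ ·))) = ∑ i ∈ range #D, g (i + 1) := by
  induction D using Finset.induction_on_min with
  | empty => simp
  | insert a s hmin ih =>
    have ha : a ∉ s := fun h => lt_irrefl a (hmin a h)
    have h_a : (insert a s).filter (a ≤ ·) = insert a s :=
      filter_true_of_mem fun x hx => by grind
    have h_s : ∀ e ∈ s, (insert a s).filter (e ≤ ·) = s.filter (e ≤ ·) := by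
      intro e he
      ext x
      simp only [mem_filter, mem_insert]
      grind
    rw [sum_insert ha, card_insert_of_notMem ha, sum_range_succ, h_a, card_insert_of_notMem ha,
      sum_congr rfl fun e he => by rw [h_s e he], ih, add_comm]

namespace NatWord

-- A word of length `N` is a function `ℕ → ℕ` of which only the values below `N` matter.

def insertAt (p M : ℕ) (f : ℕ → ℕ) (x : ℕ) : ℕ :=
  if x < p then f x else if x = p then M else f (x - 1)

def descents (N : ℕ) (f : ℕ → ℕ) : Finset ℕ :=
  (range (N - 1)).filter fun x => f (x + 1) < f x

def Avoids132On (N : ℕ) (f : ℕ → ℕ) : Prop :=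
  ∀ x y, x < y → y + 1 < N → ¬(f x < f (y + 1) ∧ f (y + 1) < f y)

@[simp] lemma mem_descents {N : ℕ} {f : ℕ → ℕ} {x : ℕ} :
    x ∈ descents N f ↔ x + 1 < N ∧ f (x + 1) < f x := by
  simp [descents]; omega

variable {m M : ℕ} {f : ℕ → ℕ}

lemma descents_insertAt_last (hf : ∀ x, f x < M) :
    descents (m + 1) (insertAt m M f) = descents m f := by
  ext x; simp only [mem_descents, insertAt]; grind

lemma descents_insertAt_zero (hm : 0 < m) (hf : ∀ x, f x < M) :
    descents (m + 1) (insertAt 0 M f) = insert 0 ((descents m f).image (· + 1)) := by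
  ext x; simp only [mem_descents, insertAt, mem_insert, mem_image]; grind

lemma descents_insertAt_succ {e : ℕ} (he : e ∈ descents m f) (hf : ∀ x, f x < M) :
    descents (m + 1) (insertAt (e + 1) M f) =
      (descents m f).image fun x => if x < e then x else x + 1 := by
  ext x; simp only [mem_descents, insertAt, mem_image] at he ⊢; grind

lemma avoids132On_of_insertAt {p : ℕ} (hp : p ≤ m) (hf : ∀ x, f x < M)
    (h : Avoids132On (m + 1) (insertAt p M f)) : Avoids132On m f := by
  intro x y hxy hy
  rcases lt_trichotomy (y + 1) p with hc | rfl | hc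
  · have := h x y hxy (by omega); simp only [insertAt] at this; grind
  · have := h x (y + 1) (by omega) (by omega); simp only [insertAt] at this; grind
  · have := h (if x < p then x else x + 1) (y + 1) (by grind) (by omega)
    simp only [insertAt] at this; grind

lemma avoids132On_insertAt_iff {p : ℕ} (hp : p ≤ m) (hf : ∀ x, f x < M)
    (hinj : Set.InjOn f (Set.Iio m)) (hfav : Avoids132On m f) :
    Avoids132On (m + 1) (insertAt p M f) ↔ p = 0 ∨ p = m ∨ p - 1 ∈ descents m f := by
  constructor
  · intro h
    by_contra! hne
    obtain ⟨hp0, hpm, hD⟩ := hne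
    have hlt : f (p - 1) < f p := by
      have := hinj.ne (show p - 1 ∈ Set.Iio m by simp; omega) (show p ∈ Set.Iio m by simp; omega)
        (by omega)
      simp only [mem_descents] at hD
      grind
    have := h (p - 1) p (by omega) (by omega)
    simp only [insertAt] at this
    grind
  · rintro hgood x y hxy hy ⟨h1, h2⟩
    simp only [insertAt, mem_descents] at h1 h2 hgood
    rcases lt_trichotomy y p with hc | rfl | hc
    · grind [Avoids132On]
    · -- the inserted letter is the `3`, so `f y < f (y - 1)` by `hgood`
      have := hfav x (y - 1)
      grind
    · have := hfav (if x < p then x else x - 1) (y - 1)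
      grind

open scoped Classical in
/-- `k` counts descents plus one, as the second index of `S_q(n, k)` does. -/
noncomputable def weight (N k : ℕ) (f : ℕ → ℕ) : ℚ[X] :=
  if Avoids132On N f ∧ #(descents N f) + 1 = k then X ^ ∑ x ∈ descents N f, (x + 1) else 0

lemma weight_insertAt_last (hf : ∀ x, f x < M) (hinj : Set.InjOn f (Set.Iio m))
    (hfav : Avoids132On m f) (k : ℕ) :
    weight (m + 1) k (insertAt m M f) = weight m k f := by
  simp only [weight, descents_insertAt_last hf, avoids132On_insertAt_iff le_rfl hf hinj hfav,
    hfav, true_or, or_true, true_and]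

lemma weight_insertAt_zero (hf : ∀ x, f x < M) (hinj : Set.InjOn f (Set.Iio m))
    (hm : 0 < m) (hfav : Avoids132On m f) (k : ℕ) :
    weight (m + 1) (k + 1) (insertAt 0 M f) = X ^ k * weight m k f := by
  simp only [weight, descents_insertAt_zero hm hf,
    avoids132On_insertAt_iff (Nat.zero_le m) hf hinj hfav, hfav, true_or, true_and]
  rw [card_insert_of_notMem (by simp), card_image_of_injective _ (add_left_injective 1),
    sum_insert (by simp), sum_image (by simp)]
  simp only [Nat.add_right_cancel_iff]
  split_ifs with h
  · rw [← pow_add]; congr 1; rw [sum_add_distrib, sum_const, smul_eq_mul]; omega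
  · simp

lemma weight_insertAt_succ (hf : ∀ x, f x < M) (hinj : Set.InjOn f (Set.Iio m))
    {e : ℕ} (he : e ∈ descents m f) (hfav : Avoids132On m f) (k : ℕ) :
    weight (m + 1) (k + 1) (insertAt (e + 1) M f) =
      if #(descents m f) = k then
        X ^ (∑ x ∈ descents m f, (x + 1) + #((descents m f).filter (e ≤ ·))) else 0 := by
  have hinj' : Set.InjOn (fun x => if x < e then x else x + 1) (descents m f) := by
    intro x _ y _ h; grind
  simp only [weight, descents_insertAt_succ he hf,
    avoids132On_insertAt_iff (mem_descents.mp he).1.le hf hinj hfav, add_tsub_cancel_right, he,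
    or_true, true_and, card_image_of_injOn hinj', sum_image hinj', Nat.add_right_cancel_iff]
  congr 2
  rw [card_filter, ← sum_add_distrib]
  exact sum_congr rfl fun x _ => by split_ifs <;> omega

lemma weight_insertAt_succ_of_notMem (hf : ∀ x, f x < M)
    (hinj : Set.InjOn f (Set.Iio m)) {e : ℕ} (he : e + 1 < m)
    (hD : e ∉ descents m f) (hfav : Avoids132On m f) (k : ℕ) :
    weight (m + 1) k (insertAt (e + 1) M f) = 0 := by
  refine if_neg fun h => ?_
  rcases (avoids132On_insertAt_iff he.le hf hinj hfav).mp h.1 with h | h | h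
  · omega
  · omega
  · exact hD (by simpa using h)

lemma sum_weight_insertAt (hf : ∀ x, f x < M) (hinj : Set.InjOn f (Set.Iio m))
    (hm : 0 < m) (k : ℕ) :
    ∑ p ∈ range (m + 1), weight (m + 1) (k + 1) (insertAt p M f) =
      X ^ k * weight m k f + qint (k + 1) * weight m (k + 1) f := by
  by_cases hfav : Avoids132On m f
  swap
  · have hzero : ∀ p ≤ m, ∀ j, weight (m + 1) j (insertAt p M f) = 0 := fun p hp _ =>
      if_neg fun h => hfav (avoids132On_of_insertAt hp hf h.1)
    rw [sum_eq_zero fun p hp => hzero p (by simpa [Nat.lt_succ_iff] using hp) _]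
    simp [weight, hfav]
  obtain ⟨m, rfl⟩ : ∃ m', m = m' + 1 := ⟨m - 1, by omega⟩
  set D := descents (m + 1) f with hD_def
  have hmid : ∀ e ∈ range m, weight (m + 2) (k + 1) (insertAt (e + 1) M f) =
      if e ∈ D then (if #D = k then X ^ (∑ x ∈ D, (x + 1) + #(D.filter (e ≤ ·))) else 0)
      else 0 := by
    intro e he
    by_cases hD : e ∈ D
    · rw [if_pos hD]; exact weight_insertAt_succ hf hinj hD hfav k
    · rw [if_neg hD]; exact weight_insertAt_succ_of_notMem hf hinj (by simpa using he) hD hfav _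
  have hDsub : D ⊆ range m := fun x hx => by simp [D] at hx ⊢; omega
  rw [sum_range_succ, sum_range_succ', sum_congr rfl hmid, ← sum_filter,
    filter_mem_eq_inter, inter_eq_right.mpr hDsub,
    weight_insertAt_last hf hinj hfav, weight_insertAt_zero hf hinj hm hfav]
  simp only [weight, hfav, true_and, Nat.add_right_cancel_iff, ← hD_def]
  by_cases hk : #D = k
  · simp only [hk, if_true, pow_add, ← mul_sum]
    rw [sum_apply_card_filter_le D (X ^ ·), hk, qint, sum_range_succ']
    ring
  · simp [hk]

end NatWord

open NatWord

def natWord (w : Fin n → ℕ) (x : ℕ) : ℕ := if h : x < n then w ⟨x, h⟩ else 0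

@[simp] lemma natWord_val (w : Fin n → ℕ) (i : Fin n) : natWord w i = w i := by
  simp [natWord]

lemma map_valEmbedding_filter_descent (w : Fin n → ℕ) :
    (univ.filter fun i : Fin n => ∃ j : Fin n, (j : ℕ) = i + 1 ∧ w j < w i).map Fin.valEmbedding =
      descents n (natWord w) := by
  ext x
  simp only [mem_map, mem_filter, mem_univ, true_and, Fin.valEmbedding_apply, mem_descents, natWord]
  constructor
  · rintro ⟨i, ⟨j, hj, hlt⟩, rfl⟩
    grind
  · rintro ⟨hx, hlt⟩
    refine ⟨⟨x, by omega⟩, ⟨⟨x + 1, hx⟩, rfl, ?_⟩, rfl⟩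
    grind

lemma desW_eq_card_descents (w : Fin n → ℕ) : desW w = #(descents n (natWord w)) := by
  rw [desW, ← map_valEmbedding_filter_descent, card_map]

lemma majW_eq_sum_descents (w : Fin n → ℕ) : majW w = ∑ x ∈ descents n (natWord w), (x + 1) := by
  rw [majW, ← map_valEmbedding_filter_descent, sum_map]
  rfl

lemma avoids132_iff_avoids132On (w : Fin n → ℕ) : Avoids132 w ↔ Avoids132On n (natWord w) := by
  constructor
  · intro h x y hxy hy
    have := h ⟨x, by omega⟩ ⟨y, by omega⟩ ⟨y + 1, hy⟩ hxy rfl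
    simpa [natWord, show x < n by omega, show y < n by omega, hy] using this
  · intro h i j j' hij hj
    have := h i j hij (by omega)
    simp only [natWord, i.isLt, j.isLt, ← hj, j'.isLt, dite_true] at this
    exact this

open scoped Classical in
lemma weight_natWord (w : Fin n → ℕ) (k : ℕ) :
    weight n k (natWord w) = if Avoids132 w ∧ desW w + 1 = k then X ^ majW w else 0 := by
  simp only [weight, avoids132_iff_avoids132On, desW_eq_card_descents, majW_eq_sum_descents]

variable {m : ℕ}

def insertMax (p : Fin (m + 1)) (τ : Equiv.Perm (Fin m)) : Equiv.Perm (Fin (m + 1)) :=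
  (finSuccEquiv' p).trans ((Equiv.optionCongr τ).trans (finSuccEquiv' (Fin.last m)).symm)

@[simp] lemma insertMax_apply_self (p : Fin (m + 1)) (τ : Equiv.Perm (Fin m)) :
    insertMax p τ p = Fin.last m := by
  simp [insertMax]

@[simp] lemma insertMax_apply_succAbove (p : Fin (m + 1)) (τ : Equiv.Perm (Fin m)) (i : Fin m) :
    insertMax p τ (p.succAbove i) = (τ i).castSucc := by
  simp [insertMax, Fin.succAbove_last]

lemma natWord_pw_insertMax (p : Fin (m + 1)) (τ : Equiv.Perm (Fin m)) :
    natWord (pw (insertMax p τ)) = insertAt p (m + 1) (natWord (pw τ)) := by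
  funext x
  by_cases hx : x < m + 1
  swap
  · simp only [natWord, insertAt, hx, dite_false]; grind
  obtain ⟨i, rfl⟩ : ∃ i : Fin (m + 1), (i : ℕ) = x := ⟨⟨x, hx⟩, rfl⟩
  obtain rfl | ⟨j, rfl⟩ := p.eq_self_or_eq_succAbove i
  · simp [natWord, insertAt, pw, Fin.is_le]
  · have hval : (p.succAbove j : ℕ) = if (j : ℕ) < p then (j : ℕ) else (j : ℕ) + 1 := by
      simp only [Fin.succAbove, Fin.lt_def, Fin.val_castSucc]; split_ifs <;> rfl
    rw [natWord_val, pw, insertMax_apply_succAbove, Fin.val_castSucc, insertAt, hval]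
    split_ifs <;> simp_all [pw] <;> omega

lemma insertMax_bijective (m : ℕ) :
    Function.Bijective fun q : Fin (m + 1) × Equiv.Perm (Fin m) => insertMax q.1 q.2 := by
  rw [Fintype.bijective_iff_injective_and_card]
  constructor
  · rintro ⟨p, τ⟩ ⟨p', τ'⟩ h
    dsimp only at h
    obtain rfl | ⟨j, rfl⟩ := p'.eq_self_or_eq_succAbove p
    swap
    · have := insertMax_apply_self (p'.succAbove j) τ
      rw [h, insertMax_apply_succAbove] at this
      exact absurd this (Fin.castSucc_lt_last _).ne
    obtain rfl : τ = τ' := Equiv.ext fun i => Fin.castSucc_injective m <| by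
      rw [← insertMax_apply_succAbove p, ← insertMax_apply_succAbove p, h]
    rfl
  · simp [Fintype.card_perm, Nat.factorial_succ]

noncomputable def majPolyAvoiding132 (n k : ℕ) : ℚ[X] :=
  ∑ σ : Equiv.Perm (Fin n), weight n k (natWord (pw σ))

lemma natWord_pw_lt (σ : Equiv.Perm (Fin n)) (x : ℕ) : natWord (pw σ) x < n + 1 := by
  unfold natWord pw; split_ifs <;> omega

lemma natWord_pw_injOn (σ : Equiv.Perm (Fin n)) : Set.InjOn (natWord (pw σ)) (Set.Iio n) := by
  intro x hx y hy h
  simp only [Set.mem_Iio] at hx hy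
  simpa [natWord, pw, hx, hy, Fin.val_inj] using h

lemma majPolyAvoiding132_succ_succ (hm : 0 < m) (k : ℕ) :
    majPolyAvoiding132 (m + 1) (k + 1) = X ^ k * majPolyAvoiding132 m k + qint (k + 1) * majPolyAvoiding132 m (k + 1) := by
  rw [majPolyAvoiding132, ← (insertMax_bijective m).sum_comp, Fintype.sum_prod_type_right, majPolyAvoiding132,
    majPolyAvoiding132, mul_sum, mul_sum, ← sum_add_distrib]
  refine sum_congr rfl fun τ _ => ?_
  simp only [natWord_pw_insertMax]
  rw [Fin.sum_univ_eq_sum_range (fun p => weight (m + 1) (k + 1) (insertAt p (m + 1) _)),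
    sum_weight_insertAt (natWord_pw_lt τ) (natWord_pw_injOn τ) hm]

lemma majPolyAvoiding132_zero_right (n : ℕ) : majPolyAvoiding132 n 0 = 0 := by
  simp [majPolyAvoiding132, weight]

lemma majPolyAvoiding132_one (k : ℕ) : majPolyAvoiding132 1 k = if k = 1 then 1 else 0 := by
  have hD : descents 1 (natWord (pw (1 : Equiv.Perm (Fin 1)))) = ∅ := by ext; simp
  have hav : Avoids132On 1 (natWord (pw (1 : Equiv.Perm (Fin 1)))) := fun x y _ _ => by omega
  simp [majPolyAvoiding132, weight, hD, hav, eq_comm]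

lemma Sq_one (k : ℕ) : Sq 1 k = if k = 1 then 1 else 0 := by
  rcases k with _ | _ | k <;> simp [Sq, qint]

lemma majPolyAvoiding132_eq_Sq {n : ℕ} (hn : 1 ≤ n) (k : ℕ) : majPolyAvoiding132 n k = Sq n k := by
  induction n, hn using Nat.le_induction generalizing k with
  | base => rw [majPolyAvoiding132_one, Sq_one]
  | succ m hm ih =>
    rcases k with _ | k
    · exact majPolyAvoiding132_zero_right _
    · rw [majPolyAvoiding132_succ_succ hm, ih, ih]; rfl

open scoped Classical in
/-- The sum of q^{MAJ(σ)} over 1-32-avoiding permutations of [n] with k−1 descents is S_q(n,k). -/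
theorem stmt12 (n k : ℕ) (hk : 1 ≤ k) (hn : k ≤ n) :
    ∑ p ∈ (Finset.univ : Finset (Equiv.Perm (Fin n))).filter
        (fun p => Avoids132 (pw p) ∧ desW (pw p) = k - 1),
      (Polynomial.X : Polynomial ℚ) ^ majW (pw p) = Sq n k := by
  rw [← majPolyAvoiding132_eq_Sq (hk.trans hn), majPolyAvoiding132, sum_filter]
  refine sum_congr rfl fun σ _ => ?_
  rw [weight_natWord]
  simp only [eq_tsub_iff_add_eq_of_le hk]
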